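/- Let n ≥ 1, let σ_1,…,σ_{n+1} ∈ Σ_{r^m}* be words, let 1 ≤ i ≤ n, let w ∈ Σ_{r^m}* be a nonempty word, and let k ∈ ℕ. Then ρ(σ_{n+1}·σ_n⋯σ_{i+1}·w^k·σ_i⋯σ_1) = Γ_{σ_{n+1}⋯σ_1}( (1 − r^{k·|w|})·Γ_{σ_i⋯σ_1}^{-1}(ξ(w)) ), where σ_j⋯σ_1 denotes the concatenated word σ_j·σ_{j−1}⋯σ_1 and w^k the k-fold concatenation of w. -/
import Mathlib


/-- The alphabet `Σ_{r^m}` of digit vectors. -/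
abbrev Alpha (r m : ℕ) := Fin m → Fin r
abbrev Word (r m : ℕ) := List (Alpha r m)

/-- `ρ(b₁⋯bₙ) = Σᵢ r^(i-1)·bᵢ` (least significant digit first), viewed in `ℝ^m`. -/
noncomputable def rho (r m : ℕ) : Word r m → (Fin m → ℝ)
  | [] => 0
  | b :: w => (fun j => (b j : ℝ)) + (r : ℝ) • rho r m w

/-- `Γ_σ(x) = r^|σ|·x + ρ(σ)`. -/
noncomputable def Gam (r m : ℕ) (σ : Word r m) (x : Fin m → ℝ) : Fin m → ℝ :=
  (r : ℝ) ^ σ.length • x + rho r m σ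

/-- The inverse bijection `Γ_σ⁻¹(y) = (y - ρ(σ))/r^|σ|`. -/
noncomputable def GamInv (r m : ℕ) (σ : Word r m) (y : Fin m → ℝ) : Fin m → ℝ :=
  ((r : ℝ) ^ σ.length)⁻¹ • (y - rho r m σ)

/-- `ξ(σ) = ρ(σ)/(1 - r^|σ|)` (meaningful for nonempty `σ`). -/
noncomputable def xi (r m : ℕ) (σ : Word r m) : Fin m → ℝ :=
  (1 - (r : ℝ) ^ σ.length)⁻¹ • rho r m σ

/-- `ρ(L) = {ρ(σ) : σ ∈ L}`. -/
def rhoSet (r m : ℕ) (L : Set (Word r m)) : Set (Fin m → ℝ) :=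
  {x | ∃ σ ∈ L, x = rho r m σ}

/-- `ξ(L) = {ξ(σ) : σ ∈ L, σ ≠ ε}`. -/
def xiSet (r m : ℕ) (L : Set (Word r m)) : Set (Fin m → ℝ) :=
  {x | ∃ σ ∈ L, σ ≠ [] ∧ x = xi r m σ}

/-- Kleene star of a language. -/
def kstar' {α : Type*} (L : Set (List α)) : Set (List α) :=
  {w | ∃ ws : List (List α), (∀ u ∈ ws, u ∈ L) ∧ w = ws.flatten}

/-- Concatenation of two languages. -/
def catL {α : Type*} (A B : Set (List α)) : Set (List α) :=
  {w | ∃ a ∈ A, ∃ b ∈ B, w = a ++ b}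

/-- `chainLang σ Ls n = σ_{n+1}·(L_n)*·σ_n ⋯ (L_1)*·σ_1`. -/
def chainLang {α : Type*} (σ : ℕ → List α) (Ls : ℕ → Set (List α)) : ℕ → Set (List α)
  | 0 => {σ 1}
  | n + 1 => catL {σ (n + 2)} (catL (kstar' (Ls (n + 1))) (chainLang σ Ls n))

/-- `catDown σ hi lo = σ_hi·σ_{hi-1}⋯σ_lo` (empty if `lo > hi`). -/
def catDown {α : Type*} (σ : ℕ → List α) (hi lo : ℕ) : List α :=
  ((List.range (hi + 1 - lo)).map fun j => σ (hi - j)).flatten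

/-- `catUp σ k = σ_1·σ_2⋯σ_k`. -/
def catUp {α : Type*} (σ : ℕ → List α) (k : ℕ) : List α :=
  ((List.range k).map fun j => σ (j + 1)).flatten

/-- `σ^k`, the `k`-fold concatenation of `σ`. -/
def repK {α : Type*} (σ : List α) (k : ℕ) : List α := (List.replicate k σ).flatten

/-- `ℝ₋·X = {t·x : t ≤ 0, x ∈ X}`. -/
def negSmul {m : ℕ} (X : Set (Fin m → ℝ)) : Set (Fin m → ℝ) :=
  {y | ∃ t : ℝ, t ≤ 0 ∧ ∃ x ∈ X, y = t • x}

/-- The cone `C(R)` generated by a finite set of rays. -/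
def coneOf {m : ℕ} (R : Finset ((Fin m → ℝ) × ℝ)) : Set ((Fin m → ℝ) × ℝ) :=
  {y | ∃ t : ((Fin m → ℝ) × ℝ) → ℝ, (∀ p, 0 ≤ t p) ∧ y = ∑ p ∈ R, t p • p}

/-- The polyhedral convex set `P(R) = {x : (x,1) ∈ C(R)}`. -/
def polyOf {m : ℕ} (R : Finset ((Fin m → ℝ) × ℝ)) : Set (Fin m → ℝ) :=
  {x | (x, (1 : ℝ)) ∈ coneOf R}

lemma rho_append (r m : ℕ) (a b : Word r m) :
    rho r m (a ++ b) = rho r m a + (r : ℝ) ^ a.length • rho r m b := by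
  induction a with
  | nil => simp [rho]
  | cons x a ih =>
      simp only [List.cons_append, rho, List.length_cons, List.append_eq]
      rw [ih, smul_add, smul_smul, ← add_assoc, pow_succ']

lemma length_repK {α : Type*} (w : List α) (k : ℕ) :
    (repK w k).length = k * w.length := by
  simp [repK, List.length_flatten, List.map_replicate, List.sum_replicate]

lemma rho_repK (r m : ℕ) (hr : 2 ≤ r) (w : Word r m) (hw : w ≠ []) (k : ℕ) :
    rho r m (repK w k) = (1 - (r : ℝ) ^ (k * w.length)) • xi r m w := by
  have hne : (1 - (r : ℝ) ^ w.length) ≠ 0 := by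
    have h1 : (1 : ℝ) < (r : ℝ) ^ w.length := by
      apply one_lt_pow₀
      · exact_mod_cast lt_of_lt_of_le one_lt_two hr
      · simpa using hw
    linarith
  have hrw : rho r m w = (1 - (r : ℝ) ^ w.length) • xi r m w := by
    rw [xi, smul_smul, mul_inv_cancel₀ hne, one_smul]
  induction k with
  | zero => simp [repK, rho]
  | succ k ih =>
      have h : repK w (k + 1) = w ++ repK w k := by
        simp [repK, List.replicate_succ]
      rw [h, rho_append, ih, hrw]
      have hlen : (k + 1) * w.length = w.length + k * w.length := by ring
      rw [hlen, pow_add]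
      module

lemma catDown_split {α : Type*} (σ : ℕ → List α) (hi mid lo : ℕ)
    (h1 : lo ≤ mid + 1) (h2 : mid ≤ hi) :
    catDown σ hi lo = catDown σ hi (mid + 1) ++ catDown σ mid lo := by
  have ha : hi + 1 - lo = (hi - mid) + (mid + 1 - lo) := by omega
  rw [catDown, ha, List.range_add, List.map_append, List.flatten_append]
  congr 1
  · have hb : hi + 1 - (mid + 1) = hi - mid := by omega
    rw [catDown, hb]
  · rw [catDown, List.map_map]
    congr 1
    apply List.map_congr_left
    intro j hj
    simp only [List.mem_range] at hj
    simp only [Function.comp_apply]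
    congr 1
    omega

/-- `ρ(σ_{n+1}⋯σ_{i+1}·w^k·σ_i⋯σ_1)
    = Γ_{σ_{n+1}⋯σ_1}((1-r^{k|w|})·Γ_{σ_i⋯σ_1}⁻¹(ξ(w)))`. -/
theorem rho_power_middle
    (r m : ℕ) (hr : 2 ≤ r) (hm : 1 ≤ m)
    (n : ℕ) (hn : 1 ≤ n) (σ : ℕ → Word r m)
    (i : ℕ) (hi : i ∈ Finset.Icc 1 n)
    (w : Word r m) (hw : w ≠ []) (k : ℕ) :
    rho r m (catDown σ (n + 1) (i + 1) ++ repK w k ++ catDown σ i 1) =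
      Gam r m (catDown σ (n + 1) 1)
        ((1 - (r : ℝ) ^ (k * w.length)) •
          GamInv r m (catDown σ i 1) (xi r m w)) := by
  set A := catDown σ (n + 1) (i + 1) with hA
  set C := catDown σ i 1 with hC
  simp only [Finset.mem_Icc] at hi
  have hsplit : catDown σ (n + 1) 1 = A ++ C := catDown_split σ (n+1) i 1 (by omega) (by omega)
  have hCne : ((r : ℝ) ^ C.length) ≠ 0 := by
    have : (0:ℝ) < (r:ℝ) := by positivity
    positivity
  rw [hsplit, Gam, GamInv]
  simp only [rho_append, rho_repK r m hr w hw k, List.length_append, length_repK]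
  have key : ((r:ℝ) ^ (A.length + C.length)) •
      ((1 - (r:ℝ) ^ (k * w.length)) • (((r:ℝ) ^ C.length)⁻¹ • (xi r m w - rho r m C))) =
      ((r:ℝ) ^ A.length * (1 - (r:ℝ) ^ (k * w.length))) • (xi r m w - rho r m C) := by
    rw [smul_smul, smul_smul]
    congr 1
    rw [pow_add]
    field_simp
  rw [key, pow_add, mul_smul, smul_sub]
  module
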